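/- Every bipartition of excess (0,4) is the coordinate-wise sum of two bipartitions each of excess (0,2). -/

import Mathlib

/-!
Split every part in half: `μ i = ⌈λ_i / 2⌉` and `ν i = ⌊λ_i / 2⌋`. Both halvings are monotone,
fix `0`, and turn a rise by at most `2e` into a rise by at most `e`, so each half is again a
bipartition, of halved excess.
-/

/-- A bipartition: a sequence (indexed from 1; position 0 is unused and set to 0)
of naturals, eventually zero, with `λ₁ ≥ λ₃ ≥ λ₅ ≥ ⋯` and `λ₂ ≥ λ₄ ≥ λ₆ ≥ ⋯`. -/
def IsBipartition (l : ℕ → ℕ) : Prop :=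
  l 0 = 0 ∧ (∀ i, 1 ≤ i → l (i + 2) ≤ l i) ∧ ∃ M, ∀ i, M ≤ i → l i = 0

/-- `λ` has excess `(e, e')`: `λ_i + e ≥ λ_{i+1}` for odd `i` and
`λ_i + e' ≥ λ_{i+1}` for even `i ≥ 2`. -/
def HasExcess (l : ℕ → ℕ) (e e' : ℕ) : Prop :=
  ∀ i, 1 ≤ i → (Odd i → l (i + 1) ≤ l i + e) ∧ (Even i → l (i + 1) ≤ l i + e')

/-- `|λ| = n`. -/
def BSize (l : ℕ → ℕ) (n : ℕ) : Prop :=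
  ∃ M, (∀ i, M ≤ i → l i = 0) ∧ (∑ i ∈ Finset.range M, l i) = n

section Comp

variable {l : ℕ → ℕ} {f : ℕ → ℕ}

theorem IsBipartition.comp (hl : IsBipartition l) (hf : Monotone f) (hf0 : f 0 = 0) :
    IsBipartition (f ∘ l) := by
  obtain ⟨hl0, hmono, M, hM⟩ := hl
  refine ⟨by simp [hl0, hf0], fun i hi => hf (hmono i hi), M, fun i hi => ?_⟩
  simp [hM i hi, hf0]

theorem HasExcess.comp {e e' d d' : ℕ} (hl : HasExcess l e e') (hf : Monotone f)
    (hfe : ∀ a, f (a + e) ≤ f a + d) (hfe' : ∀ a, f (a + e') ≤ f a + d') :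
    HasExcess (f ∘ l) d d' := fun i hi =>
  ⟨fun hodd => (hf ((hl i hi).1 hodd)).trans (hfe _),
    fun heven => (hf ((hl i hi).2 heven)).trans (hfe' _)⟩

end Comp

theorem monotone_div_two : Monotone fun a : ℕ => a / 2 :=
  fun _ _ h => Nat.div_le_div_right h

theorem monotone_add_one_div_two : Monotone fun a : ℕ => (a + 1) / 2 :=
  fun _ _ h => Nat.div_le_div_right (Nat.add_le_add_right h 1)

theorem exists_add_of_hasExcess_two_mul {l : ℕ → ℕ} {e e' : ℕ} (hl : IsBipartition l)
    (hle : HasExcess l (2 * e) (2 * e')) :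
    ∃ μ ν : ℕ → ℕ,
      IsBipartition μ ∧ HasExcess μ e e' ∧
      IsBipartition ν ∧ HasExcess ν e e' ∧
      ∀ i, l i = μ i + ν i := by
  have hceil (k a : ℕ) : (a + 2 * k + 1) / 2 ≤ (a + 1) / 2 + k := by omega
  have hfloor (k a : ℕ) : (a + 2 * k) / 2 ≤ a / 2 + k := by omega
  refine ⟨(fun a => (a + 1) / 2) ∘ l, (fun a => a / 2) ∘ l,
    hl.comp monotone_add_one_div_two rfl, hle.comp monotone_add_one_div_two (hceil e) (hceil e'),
    hl.comp monotone_div_two rfl, hle.comp monotone_div_two (hfloor e) (hfloor e'),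
    fun i => by simp only [Function.comp_apply]; omega⟩

theorem excess_zero_four_decompose (l : ℕ → ℕ)
    (hl : IsBipartition l) (hle : HasExcess l 0 4) :
    ∃ μ ν : ℕ → ℕ,
      IsBipartition μ ∧ HasExcess μ 0 2 ∧
      IsBipartition ν ∧ HasExcess ν 0 2 ∧
      ∀ i, l i = μ i + ν i :=
  exists_add_of_hasExcess_two_mul (e := 0) (e' := 2) hl hle
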